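/- Let F, G be density operators on ℂ^d ⊗ ℂ^d, K ≥ 2, and define the map 𝓛(τ) = F·Tr(Φ_K τ) + G·Tr((𝟙−Φ_K)τ) on operators of ℂ^K ⊗ ℂ^K. Then 𝓛(τ^Γ)^Γ ≥ 0 for all τ ≥ 0 if and only if both F^Γ/K + (1−1/K)G^Γ ≥ 0 and (1+1/K)G^Γ − F^Γ/K ≥ 0. (Uses Φ_K^Γ = (𝒮−𝒜)/K and that 𝒮, 𝒜 are orthogonal projectors summing to 𝟙.) -/

import Mathlib

/-!
Since `Φ_K^Γ = (𝒮 - 𝒜)/K` and `Tr τ^Γ = Tr τ = Tr(𝒮τ) + Tr(𝒜τ)`, one finds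
`𝓛(τ^Γ)^Γ = Tr(𝒮τ) • P + Tr(𝒜τ) • Q`, where `P = F^Γ/K + (1-1/K)G^Γ` and
`Q = (1+1/K)G^Γ - F^Γ/K`. For `τ ≥ 0` both coefficients are nonnegative, which gives one
direction; testing with `τ = 𝒮` and `τ = 𝒜` (orthogonal projectors, both nonzero as `K ≥ 2`)
isolates `P` and `Q`, which gives the other.
-/

open scoped ComplexOrder

/-- The basis vector `|ij⟩` of `ℂ^n ⊗ ℂ^n`. -/
def ketC {n : ℕ} (i j : Fin n) : Fin n × Fin n → ℂ := fun p => if p = (i, j) then 1 else 0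

/-- Partial transpose: `(|ij⟩⟨kl|)^Γ = |il⟩⟨kj|`. -/
def ptransC {n : ℕ} (M : Matrix (Fin n × Fin n) (Fin n × Fin n) ℂ) :
    Matrix (Fin n × Fin n) (Fin n × Fin n) ℂ :=
  fun p q => M (p.1, q.2) (q.1, p.2)

open Matrix

section StarProjection

variable {ι : Type*}

lemma Matrix.PosSemidef.of_smul {P : Matrix ι ι ℂ} {c : ℂ} (hc : 0 < c)
    (h : (c • P).PosSemidef) : P.PosSemidef := by
  simpa [smul_smul, inv_mul_cancel₀ hc.ne'] using h.smul (RCLike.inv_pos_of_pos hc).le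

variable [Fintype ι]

lemma IsStarProjection.posSemidef {p : Matrix ι ι ℂ} (hp : IsStarProjection p) :
    p.PosSemidef := by
  open scoped MatrixOrder in exact hp.nonneg.posSemidef

lemma IsStarProjection.trace_pos {p : Matrix ι ι ℂ} (hp : IsStarProjection p) (h : p ≠ 0) :
    0 < p.trace :=
  hp.posSemidef.trace_nonneg.lt_of_ne' fun h0 => h (hp.posSemidef.trace_eq_zero_iff.mp h0)

lemma IsStarProjection.trace_mul_nonneg {p τ : Matrix ι ι ℂ} (hp : IsStarProjection p)
    (hτ : τ.PosSemidef) : 0 ≤ (p * τ).trace := by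
  have h := (hτ.conjTranspose_mul_mul_same p).trace_nonneg
  rwa [show pᴴ = p from hp.isSelfAdjoint, trace_mul_cycle, hp.isIdempotentElem.eq] at h

theorem forall_posSemidef_trace_mul_smul_add_iff [DecidableEq ι] {m : Type*}
    {p : Matrix ι ι ℂ} (hp : IsStarProjection p) (hp0 : p ≠ 0) (hp1 : p ≠ 1)
    {P Q : Matrix m m ℂ} :
    (∀ τ : Matrix ι ι ℂ, τ.PosSemidef →
        ((p * τ).trace • P + ((1 - p) * τ).trace • Q).PosSemidef) ↔
      P.PosSemidef ∧ Q.PosSemidef := by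
  have hq : IsStarProjection (1 - p) := hp.one_sub
  constructor
  · intro h
    constructor
    · have hP := h p hp.posSemidef
      rw [hp.isIdempotentElem.eq, hp.one_sub_mul_self, trace_zero, zero_smul, add_zero] at hP
      exact hP.of_smul (hp.trace_pos hp0)
    · have hQ := h (1 - p) hq.posSemidef
      rw [hp.mul_one_sub_self, hq.isIdempotentElem.eq, trace_zero, zero_smul, zero_add] at hQ
      exact hQ.of_smul (hq.trace_pos (sub_ne_zero.mpr hp1.symm))
  · rintro ⟨hP, hQ⟩ τ hτ
    exact (hP.smul (hp.trace_mul_nonneg hτ)).add (hQ.smul (hq.trace_mul_nonneg hτ))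

end StarProjection

section SwapOperator

variable (n : Type*) [DecidableEq n]

def swapMatrix : Matrix (n × n) (n × n) ℂ := Matrix.of fun p q => if q = p.swap then 1 else 0

noncomputable def symProjector [Fintype n] : Matrix (n × n) (n × n) ℂ :=
  (2⁻¹ : ℂ) • (1 + swapMatrix n)

noncomputable def antisymProjector [Fintype n] : Matrix (n × n) (n × n) ℂ :=
  1 - symProjector n

variable {n}

lemma swapMatrix_apply (p q : n × n) : swapMatrix n p q = if q = p.swap then 1 else 0 := rfl

lemma conjTranspose_swapMatrix : (swapMatrix n)ᴴ = swapMatrix n := by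
  ext p q
  simp only [conjTranspose_apply, swapMatrix_apply, apply_ite star, star_one, star_zero]
  exact if_congr ⟨fun h => by simp [h], fun h => by simp [h]⟩ rfl rfl

variable [Fintype n]

lemma swapMatrix_mul_self : swapMatrix n * swapMatrix n = 1 := by
  ext p q
  rw [mul_apply, Finset.sum_eq_single p.swap (fun j _ hj => by simp [swapMatrix_apply, hj])
    (by simp)]
  simp [swapMatrix_apply, one_apply, eq_comm]

lemma isStarProjection_symProjector : IsStarProjection (symProjector n) where
  isIdempotentElem := by
    rw [IsIdempotentElem, symProjector, smul_mul_smul]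
    simp only [mul_add, add_mul, one_mul, mul_one, swapMatrix_mul_self]
    module
  isSelfAdjoint := by
    simp [IsSelfAdjoint, symProjector, star_eq_conjTranspose, conjTranspose_swapMatrix]

lemma symProjector_add_antisymProjector : symProjector n + antisymProjector n = 1 :=
  add_sub_cancel _ _

lemma symProjector_sub_antisymProjector :
    symProjector n - antisymProjector n = swapMatrix n := by
  rw [antisymProjector, symProjector]
  module

lemma symProjector_apply_self (i j : n) :
    symProjector n (i, j) (i, j) = 2⁻¹ * (1 + if i = j then 1 else 0) := by
  simp [symProjector, swapMatrix_apply, Prod.ext_iff, eq_comm]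

lemma symProjector_ne_zero [Nonempty n] : symProjector n ≠ 0 := by
  obtain ⟨i⟩ := ‹Nonempty n›
  intro h
  simpa [symProjector_apply_self] using congrFun (congrFun h (i, i)) (i, i)

lemma symProjector_ne_one [Nontrivial n] : symProjector n ≠ 1 := by
  obtain ⟨i, j, hij⟩ := exists_pair_ne n
  intro h
  simpa [symProjector_apply_self, hij] using congrFun (congrFun h (i, j)) (i, j)

end SwapOperator

section PartialTranspose

variable {n : ℕ}

lemma ptransC_add (A B : Matrix (Fin n × Fin n) (Fin n × Fin n) ℂ) :
    ptransC (A + B) = ptransC A + ptransC B := rfl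

lemma ptransC_smul (c : ℂ) (A : Matrix (Fin n × Fin n) (Fin n × Fin n) ℂ) :
    ptransC (c • A) = c • ptransC A := rfl

lemma trace_ptransC (A : Matrix (Fin n × Fin n) (Fin n × Fin n) ℂ) :
    (ptransC A).trace = A.trace := rfl

lemma trace_mul_ptransC (A B : Matrix (Fin n × Fin n) (Fin n × Fin n) ℂ) :
    (A * ptransC B).trace = (ptransC A * B).trace := by
  simp only [trace, diag, mul_apply, ptransC, Fintype.sum_prod_type]
  refine Finset.sum_congr rfl fun a _ => ?_
  rw [Finset.sum_comm]
  conv_rhs => rw [Finset.sum_comm]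
  exact Finset.sum_congr rfl fun c _ => Finset.sum_comm

lemma ptransC_sum_vecMulVec_ketC :
    ptransC (∑ i, ∑ j, vecMulVec (ketC i i) (ketC j j)) = swapMatrix (Fin n) := by
  ext p q
  simp [ptransC, swapMatrix_apply, Matrix.sum_apply, vecMulVec_apply, ketC, Prod.ext_iff,
    ite_and, Finset.sum_ite_eq', and_comm, eq_comm]
  split_ifs <;> rfl

end PartialTranspose

theorem stmt15_general (d K : ℕ) (hK : 2 ≤ K)
    (F G : Matrix (Fin d × Fin d) (Fin d × Fin d) ℂ)
    (Phi : Matrix (Fin K × Fin K) (Fin K × Fin K) ℂ)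
    (hPhi : Phi = ((K:ℂ)⁻¹) • ∑ i, ∑ j, Matrix.vecMulVec (ketC i i) (ketC j j))
    (L : Matrix (Fin K × Fin K) (Fin K × Fin K) ℂ →
      Matrix (Fin d × Fin d) (Fin d × Fin d) ℂ)
    (hL : ∀ τ, L τ = (Phi * τ).trace • F
      + ((((1 : Matrix (Fin K × Fin K) (Fin K × Fin K) ℂ) - Phi) * τ).trace) • G) :
    (∀ τ : Matrix (Fin K × Fin K) (Fin K × Fin K) ℂ, τ.PosSemidef →
        (ptransC (L (ptransC τ))).PosSemidef) ↔
      (((K:ℂ)⁻¹ • ptransC F + (1 - (K:ℂ)⁻¹) • ptransC G).PosSemidef ∧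
       ((1 + (K:ℂ)⁻¹) • ptransC G - (K:ℂ)⁻¹ • ptransC F).PosSemidef) := by
  have : Nontrivial (Fin K) := Fin.nontrivial_iff_two_le.mpr hK
  set S := symProjector (Fin K)
  set A := antisymProjector (Fin K)
  have hPhi_ptransC (τ) :
      (Phi * ptransC τ).trace = (K:ℂ)⁻¹ * ((S * τ).trace - (A * τ).trace) := by
    rw [trace_mul_ptransC, hPhi, ptransC_smul, ptransC_sum_vecMulVec_ketC, smul_mul, trace_smul,
      ← trace_sub, ← sub_mul, symProjector_sub_antisymProjector, smul_eq_mul]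
  have htrace (τ : Matrix (Fin K × Fin K) (Fin K × Fin K) ℂ) :
      τ.trace = (S * τ).trace + (A * τ).trace := by
    rw [← trace_add, ← add_mul, symProjector_add_antisymProjector, one_mul]
  have hL_ptransC (τ) : ptransC (L (ptransC τ)) =
      (S * τ).trace • ((K:ℂ)⁻¹ • ptransC F + (1 - (K:ℂ)⁻¹) • ptransC G) +
        (A * τ).trace • ((1 + (K:ℂ)⁻¹) • ptransC G - (K:ℂ)⁻¹ • ptransC F) := by
    rw [hL, sub_mul, trace_sub, one_mul, trace_ptransC, hPhi_ptransC, htrace τ, ptransC_add,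
      ptransC_smul, ptransC_smul]
    module
  simp only [hL_ptransC]
  exact forall_posSemidef_trace_mul_smul_add_iff isStarProjection_symProjector
    symProjector_ne_zero symProjector_ne_one

/-- For density operators `F, G` and the twirled map
`𝓛(τ) = F·Tr(Φ_K τ) + G·Tr((𝟙−Φ_K)τ)`, one has `𝓛(τ^Γ)^Γ ≥ 0` for all `τ ≥ 0` iff
`F^Γ/K + (1−1/K)G^Γ ≥ 0` and `(1+1/K)G^Γ − F^Γ/K ≥ 0`. -/
theorem stmt15 (d K : ℕ) (hK : 2 ≤ K)
    (F G : Matrix (Fin d × Fin d) (Fin d × Fin d) ℂ)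
    (hF : F.PosSemidef) (hFtr : F.trace = 1)
    (hG : G.PosSemidef) (hGtr : G.trace = 1)
    (Phi : Matrix (Fin K × Fin K) (Fin K × Fin K) ℂ)
    (hPhi : Phi = ((K:ℂ)⁻¹) • ∑ i, ∑ j, Matrix.vecMulVec (ketC i i) (ketC j j))
    (L : Matrix (Fin K × Fin K) (Fin K × Fin K) ℂ →
      Matrix (Fin d × Fin d) (Fin d × Fin d) ℂ)
    (hL : ∀ τ, L τ = (Phi * τ).trace • F
      + ((((1 : Matrix (Fin K × Fin K) (Fin K × Fin K) ℂ) - Phi) * τ).trace) • G) :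
    (∀ τ : Matrix (Fin K × Fin K) (Fin K × Fin K) ℂ, τ.PosSemidef →
        (ptransC (L (ptransC τ))).PosSemidef) ↔
      (((K:ℂ)⁻¹ • ptransC F + (1 - (K:ℂ)⁻¹) • ptransC G).PosSemidef ∧
       ((1 + (K:ℂ)⁻¹) • ptransC G - (K:ℂ)⁻¹ • ptransC F).PosSemidef) :=
  stmt15_general d K hK F G Phi hPhi L hL
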